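/- If every metavariable occurs in the source pattern, then the partial function ⟦src(f)⁻⟧ ≫ ⟦src(f)⁺⟧ is the identity on its domain of definition, and ⟦src(f)⁺⟧ ≫ ⟦src(f)⁻⟧ is the total identity on assignments: matching the result of substitution recovers the original assignment. -/

import Mathlib

/-- Syntax trees over a signature `S` with arity function `ar`. -/
inductive STree (S : Type) (ar : S → ℕ) : Type
  | leaf : ℕ → STree S ar
  | node : (g : S) → (Fin (ar g) → STree S ar) → STree S ar

/-- Terms over signature `S` with metavariables in `Fin m`. -/
inductive Term (S : Type) (ar : S → ℕ) (m : ℕ) : Type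
  | var : Fin m → Term S ar m
  | op : (g : S) → (Fin (ar g) → Term S ar m) → Term S ar m

variable {S : Type} {ar : S → ℕ} [DecidableEq S]

/-- Substitution of terms for the metavariables of a term. -/
def Term.subst {m k : ℕ} (σ : Fin m → Term S ar k) : Term S ar m → Term S ar k
  | .var i => σ i
  | .op g ts => .op g (fun j => (ts j).subst σ)

/-- Substitution of trees for the metavariables of a term (evaluation). -/
def Term.substT {m : ℕ} (σ : Fin m → STree S ar) : Term S ar m → STree S ar
  | .var i => σ i
  | .op g ts => .node g (fun j => (ts j).substT σ)

/-- Number of occurrences of the metavariable `i` in a term. -/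
def Term.countVar {m : ℕ} (i : Fin m) : Term S ar m → ℕ
  | .var j => if j = i then 1 else 0
  | .op _ ts => ∑ j, (ts j).countVar i

/-- A partial assignment of trees to metavariables. -/
def PAsn (S : Type) (ar : S → ℕ) (m : ℕ) : Type := Fin m → Option (STree S ar)

open Classical in
/-- Merge two partial assignments; fails if they disagree on some variable. -/
noncomputable def mergeAsn {m : ℕ} (σ τ : PAsn S ar m) : Option (PAsn S ar m) :=
  if ∀ i : Fin m, ∀ a ∈ σ i, ∀ b ∈ τ i, a = b then
    some (fun i => (σ i).orElse (fun _ => τ i))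
  else none

/-- Merge a finite family of optional partial assignments. -/
noncomputable def mergeAll {m : ℕ} : {k : ℕ} → (Fin k → Option (PAsn S ar m)) → Option (PAsn S ar m)
  | 0, _ => some (fun _ => none)
  | _ + 1, f =>
      (f 0).bind fun σ => (mergeAll (fun j => f j.succ)).bind (mergeAsn σ)

/-- Pattern matching of a tree against a term: returns the partial assignment of
trees to the metavariables occurring in the pattern, if the shapes agree. -/
noncomputable def Term.pmatch {m : ℕ} : Term S ar m → STree S ar → Option (PAsn S ar m)
  | .var i, t => some (fun j => if j = i then some t else none)
  | .op _ _, .leaf _ => none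
  | .op g ps, .node g' ts =>
      if h : g' = g then
        mergeAll (fun j : Fin (ar g) => (ps j).pmatch (ts (Fin.cast (by rw [h]) j)))
      else none

/-- Matching a tuple of trees against a tuple of patterns. -/
noncomputable def matchTuple {m a : ℕ} (u : Fin a → Term S ar m) (x : Fin a → STree S ar) :
    Option (PAsn S ar m) :=
  mergeAll (fun i : Fin a => (u i).pmatch (x i))

/-- Evaluating a tuple of patterns (a syntax map) at an assignment of trees. -/
def evalTuple {m a : ℕ} (u : Fin a → Term S ar m) (σ : Fin m → STree S ar) :
    Fin a → STree S ar := fun i => (u i).substT σ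

/-- Extract a total assignment from a partial one, if it is everywhere defined. -/
noncomputable def totalize {m : ℕ} (π : PAsn S ar m) : Option (Fin m → STree S ar) :=
  if h : ∀ i, (π i).isSome then some (fun i => (π i).get (h i)) else none

/-- The matcher semantics `⟦u⁻⟧` of a tuple of patterns. -/
noncomputable def matcherSem {m a : ℕ} (u : Fin a → Term S ar m)
    (x : Fin a → STree S ar) : Option (Fin m → STree S ar) :=
  (matchTuple u x).bind totalize

/-- Kleisli composition of partial functions. -/
def kcomp {A B C : Type*} (f : A → Option B) (g : B → Option C) : A → Option C :=
  fun a => (f a).bind g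

/-- Tensor of partial functions on products. -/
def pprod {A B C D : Type*} (f : A → Option B) (g : C → Option D) :
    A × C → Option (B × D) :=
  fun x => (f x.1).bind fun b => (g x.2).map fun d => (b, d)

/-! Matching `p.substT σ` against `p` returns `σ` restricted to the metavariables of `p`,
and merging restrictions of one `σ` gives its restriction to the union; so if every metavariable
occurs, totalizing recovers `σ`. Conversely, merging only extends partial assignments, so any
total assignment extending a successful match instantiates each pattern to the matched tree. -/

namespace PAsn

variable {S : Type} {ar : S → ℕ} {m : ℕ}

def Sub (π ρ : PAsn S ar m) : Prop := ∀ i, ∀ v ∈ π i, v ∈ ρ i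

theorem Sub.trans {π ρ τ : PAsn S ar m} (h₁ : π.Sub ρ) (h₂ : ρ.Sub τ) : π.Sub τ :=
  fun i v hv => h₂ i v (h₁ i v hv)

open Classical in
noncomputable def restrict (σ : Fin m → STree S ar) (P : Fin m → Prop) : PAsn S ar m :=
  fun i => if P i then some (σ i) else none

theorem sub_of_totalize_eq_some {π : PAsn S ar m} {σ : Fin m → STree S ar}
    (h : totalize π = some σ) : π.Sub fun i => some (σ i) := by
  unfold totalize at h
  split at h
  · cases h
    intro i v hv
    simp [Option.get_of_mem _ hv]
  · cases h

theorem totalize_restrict (σ : Fin m → STree S ar) {P : Fin m → Prop} (hP : ∀ i, P i) :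
    totalize (restrict σ P) = some σ := by
  have hdef : ∀ i, (restrict σ P i).isSome := fun i => by simp [restrict, hP i]
  rw [totalize, dif_pos hdef]
  congr 1
  funext i
  simp [restrict, hP i]

theorem sub_of_mergeAsn_eq_some {π τ ρ : PAsn S ar m} (h : mergeAsn π τ = some ρ) :
    π.Sub ρ ∧ τ.Sub ρ := by
  unfold mergeAsn at h
  split at h
  case isFalse => cases h
  case isTrue hagree =>
    cases h
    refine ⟨fun i v hv => by simp_all [Option.mem_def], fun i v hv => ?_⟩
    cases hπ : π i with
    | none => simpa [hπ] using hv
    | some w => simpa [hπ] using hagree i w hπ v hv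

theorem mergeAsn_restrict (σ : Fin m → STree S ar) (P Q : Fin m → Prop) :
    mergeAsn (restrict σ P) (restrict σ Q) = some (restrict σ fun i => P i ∨ Q i) := by
  have hagree : ∀ i, ∀ a ∈ restrict σ P i, ∀ b ∈ restrict σ Q i, a = b := by
    intro i a ha b hb
    simp only [restrict, Option.mem_def, Option.ite_none_right_eq_some, Option.some.injEq] at ha hb
    rw [← ha.2, ← hb.2]
  rw [mergeAsn, if_pos hagree]
  congr 1
  funext i
  by_cases hP : P i <;> by_cases hQ : Q i <;> simp [restrict, hP, hQ]

theorem exists_sub_of_mergeAll_eq_some :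
    ∀ {k : ℕ} {f : Fin k → Option (PAsn S ar m)} {ρ : PAsn S ar m},
      mergeAll f = some ρ → ∀ j, ∃ π, f j = some π ∧ π.Sub ρ
  | 0, _, _, _, j => j.elim0
  | k + 1, f, ρ, h, j => by
    simp only [mergeAll, Option.bind_eq_some_iff] at h
    obtain ⟨π₀, h₀, ρ', hrest, hmerge⟩ := h
    have ⟨hsub₀, hsub'⟩ := sub_of_mergeAsn_eq_some hmerge
    cases j using Fin.cases with
    | zero => exact ⟨π₀, h₀, hsub₀⟩
    | succ j =>
      obtain ⟨π, hj, hsub⟩ := exists_sub_of_mergeAll_eq_some hrest j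
      exact ⟨π, hj, hsub.trans hsub'⟩

theorem mergeAll_restrict (σ : Fin m → STree S ar) :
    ∀ {k : ℕ} (P : Fin k → Fin m → Prop),
      mergeAll (fun j => some (restrict σ (P j))) = some (restrict σ fun i => ∃ j, P j i)
  | 0, _ => by
    simp only [mergeAll, IsEmpty.exists_iff]
    congr 1
    funext i
    simp [restrict]
  | k + 1, P => by
    simp only [mergeAll, Option.bind_some, mergeAll_restrict σ fun j => P j.succ,
      mergeAsn_restrict, Fin.exists_fin_succ]

end PAsn

open PAsn

namespace Term

variable {m : ℕ}

theorem substT_eq_of_pmatch_eq_some {σ : Fin m → STree S ar} :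
    ∀ {p : Term S ar m} {t : STree S ar} {π : PAsn S ar m},
      p.pmatch t = some π → π.Sub (fun i => some (σ i)) → p.substT σ = t
  | .var i, t, π, h, hsub => by
    cases h
    simpa [substT] using hsub i t (by simp)
  | .op _ _, .leaf _, _, h, _ => by cases h
  | .op g ps, .node g' ts, π, h, hsub => by
    unfold pmatch at h
    split at h
    case isFalse => cases h
    case isTrue hg =>
      subst hg
      simp only [substT, STree.node.injEq, heq_eq_eq, true_and]
      funext j
      obtain ⟨πj, hj, hsubj⟩ := exists_sub_of_mergeAll_eq_some h j
      exact substT_eq_of_pmatch_eq_some hj (hsubj.trans hsub)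

theorem pmatch_substT (σ : Fin m → STree S ar) :
    ∀ p : Term S ar m, p.pmatch (p.substT σ) = some (restrict σ fun i => 0 < p.countVar i)
  | .var j => by
    simp only [substT, pmatch, countVar]
    congr 1
    funext i
    by_cases hij : i = j <;> simp [restrict, hij, Ne.symm]
  | .op g ps => by
    simp only [substT, pmatch, dite_true, Fin.cast_eq_self, pmatch_substT σ, countVar,
      Finset.sum_pos_iff, Finset.mem_univ, true_and]
    exact mergeAll_restrict σ _

end Term

theorem evalTuple_eq_of_matchTuple_eq_some {m a : ℕ} {u : Fin a → Term S ar m}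
    {x : Fin a → STree S ar} {π : PAsn S ar m} {σ : Fin m → STree S ar}
    (h : matchTuple u x = some π) (hsub : π.Sub fun i => some (σ i)) :
    evalTuple u σ = x := by
  funext j
  obtain ⟨πj, hj, hsubj⟩ := exists_sub_of_mergeAll_eq_some h j
  exact Term.substT_eq_of_pmatch_eq_some hj (hsubj.trans hsub)

theorem matchTuple_evalTuple {m a : ℕ} (u : Fin a → Term S ar m) (σ : Fin m → STree S ar) :
    matchTuple u (evalTuple u σ) = some (restrict σ fun i => ∃ j, 0 < (u j).countVar i) := by
  simp only [matchTuple, evalTuple, Term.pmatch_substT]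
  exact mergeAll_restrict σ _

/-- If every metavariable occurs in the source patterns, then
`⟦src(f)⁻⟧ ≫ ⟦src(f)⁺⟧` is the identity on its domain of definition, and
`⟦src(f)⁺⟧ ≫ ⟦src(f)⁻⟧` is the (total) identity on assignments. -/
theorem stmt14 {m a : ℕ} (src : Fin a → Term S ar m)
    (hocc : ∀ i : Fin m, ∃ j : Fin a, 0 < (src j).countVar i) :
    (∀ (x y : Fin a → STree S ar),
      (matcherSem src x).bind (fun σ => some (evalTuple src σ)) = some y → y = x) ∧
    (∀ σ : Fin m → STree S ar, matcherSem src (evalTuple src σ) = some σ) := by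
  refine ⟨fun x y h => ?_, fun σ => ?_⟩
  · simp only [matcherSem, Option.bind_eq_some_iff, Option.some.injEq] at h
    obtain ⟨σ, ⟨π, hmatch, htot⟩, rfl⟩ := h
    exact evalTuple_eq_of_matchTuple_eq_some hmatch (sub_of_totalize_eq_some htot)
  · rw [matcherSem, matchTuple_evalTuple, Option.bind_some]
    exact totalize_restrict σ hocc
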